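/- arXiv:1408.5024 — 11 statements merged into one kernel-verified Lean document; each statement's English description precedes it below -/
import Mathlib

section
/- Let Q be a quantity space over a scalar system K and let B = {b₁, …, bₙ} be a basis for Q. Then for all λ ∈ K and all q, q' ∈ Q: (1) μ_B(λ•q) = λ·μ_B(q), and (2) μ_B(q*q') = μ_B(q)·μ_B(q'). -/
/-- A *scalable (commutative) monoid* over a scalar system `K ⊆ F`:
`K` is a subset of the field `F` closed under addition, containing `1`,
closed under multiplication and under inverses of nonzero elements
(so the nonzero elements of `K` form a group under multiplication),
together with a scalar multiplication `smul` satisfying the axioms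
`1 • q = q`, `α • (β • q) = (α β) • q` and `α • (q * q') = (α • q) * q'`
for scalars in `K`. -/
structure ScalableMonoid (F : Type*) [Field F] (Q : Type*) [CommMonoid Q] where
  K : Set F
  one_mem : (1 : F) ∈ K
  add_mem : ∀ {a b : F}, a ∈ K → b ∈ K → a + b ∈ K
  mul_mem : ∀ {a b : F}, a ∈ K → b ∈ K → a * b ∈ K
  inv_mem : ∀ {a : F}, a ∈ K → a ≠ 0 → a⁻¹ ∈ K
  smul : F → Q → Q
  smul_one : ∀ q : Q, smul 1 q = q
  smul_smul : ∀ {a b : F}, a ∈ K → b ∈ K → ∀ q : Q, smul a (smul b q) = smul (a * b) q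
  smul_mul : ∀ {a : F}, a ∈ K → ∀ q q' : Q, smul a (q * q') = smul a q * q'

/-- `b : Fin n → Qˣ` (a list of invertible quantities) is a basis for the scalable
monoid `M` if every quantity has a unique expansion `q = μ • ∏ i, b i ^ k i`
with `μ ∈ K` and integer exponents `k`. -/
def ScalableMonoid.IsBasis {F : Type*} [Field F] {Q : Type*} [CommMonoid Q]
    (M : ScalableMonoid F Q) {n : ℕ} (b : Fin n → Qˣ) : Prop :=
  ∀ q : Q, ∃! p : M.K × (Fin n → ℤ),
    q = M.smul (p.1 : F) (↑(∏ i, b i ^ p.2 i) : Q)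

/-- A quantity space is a scalable monoid having a (finite) basis. -/
def ScalableMonoid.IsQuantitySpace {F : Type*} [Field F] {Q : Type*} [CommMonoid Q]
    (M : ScalableMonoid F Q) : Prop :=
  ∃ (n : ℕ) (b : Fin n → Qˣ), M.IsBasis b

/-- The measure `μ_B(q)`: the unique scalar in the expansion of `q` relative to
the basis `B`. -/
noncomputable def ScalableMonoid.measure {F : Type*} [Field F] {Q : Type*} [CommMonoid Q]
    (M : ScalableMonoid F Q) {n : ℕ} {b : Fin n → Qˣ} (hB : M.IsBasis b) (q : Q) : F :=
  ((hB q).choose.1 : F)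

/-- Quantities `q, q'` are equidimensional (`q ~ q'`) if `α • q = β • q'`
for some scalars `α, β ∈ K`. -/
def ScalableMonoid.Equidim {F : Type*} [Field F] {Q : Type*} [CommMonoid Q]
    (M : ScalableMonoid F Q) (q q' : Q) : Prop :=
  ∃ α β : F, α ∈ M.K ∧ β ∈ M.K ∧ M.smul α q = M.smul β q'


theorem measure_eq_of_rep {F : Type*} [Field F] {Q : Type*} [CommMonoid Q]
    (M : ScalableMonoid F Q) {n : ℕ} {b : Fin n → Qˣ} (hB : M.IsBasis b)
    (q : Q) (mu : F) (hmu : mu ∈ M.K) (k : Fin n → ℤ)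
    (h : q = M.smul mu (↑(∏ i, b i ^ k i) : Q)) : M.measure hB q = mu := by
  have hu := (hB q).choose_spec
  have h2 := hu.2 (⟨⟨mu, hmu⟩, k⟩ : M.K × (Fin n → ℤ)) h
  unfold ScalableMonoid.measure
  rw [← h2]

theorem measure_spec {F : Type*} [Field F] {Q : Type*} [CommMonoid Q]
    (M : ScalableMonoid F Q) {n : ℕ} {b : Fin n → Qˣ} (hB : M.IsBasis b) (q : Q) :
    ((hB q).choose.1 : F) ∈ M.K ∧
    q = M.smul ((hB q).choose.1 : F) (↑(∏ i, b i ^ (hB q).choose.2 i) : Q) :=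
  ⟨(hB q).choose.1.2, (hB q).choose_spec.1⟩

/-- For a quantity space `Q` with basis `B`, for all `λ ∈ K` and
`q, q' ∈ Q`: `μ_B(λ•q) = λ·μ_B(q)` and `μ_B(q*q') = μ_B(q)·μ_B(q')`. -/
theorem measure_smul_and_measure_mul {F : Type*} [Field F] {Q : Type*} [CommMonoid Q]
    (M : ScalableMonoid F Q) {n : ℕ} {b : Fin n → Qˣ} (hB : M.IsBasis b)
    (lam : F) (hlam : lam ∈ M.K) (q q' : Q) :
    M.measure hB (M.smul lam q) = lam * M.measure hB q ∧
    M.measure hB (q * q') = M.measure hB q * M.measure hB q' := by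

  obtain ⟨hK, hq⟩ := measure_spec M hB q
  obtain ⟨hK2, hq2⟩ := measure_spec M hB q'
  set mu := ((hB q).choose.1 : F)
  set mu' := ((hB q').choose.1 : F)
  set k := (hB q).choose.2
  set k' := (hB q').choose.2
  constructor
  · apply measure_eq_of_rep M hB _ _ (M.mul_mem hlam hK) k
    rw [hq, M.smul_smul hlam hK]
  · apply measure_eq_of_rep M hB _ _ (M.mul_mem hK hK2) (k + k')
    have hprod : (↑(∏ i, b i ^ (k + k') i) : Q)
        = (↑(∏ i, b i ^ k i) : Q) * (↑(∏ i, b i ^ k' i) : Q) := by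
      rw [← Units.val_mul, ← Finset.prod_mul_distrib]
      congr 1
      exact Finset.prod_congr rfl fun i _ => by simp [zpow_add]
    rw [hq, hq2, hprod]
    rw [← M.smul_mul hK, mul_comm (↑(∏ i, b i ^ k i) : Q), ← M.smul_mul hK2,
      mul_comm (↑(∏ i, b i ^ k' i) : Q), M.smul_smul hK hK2]
end

section
/- Let Q be a quantity space over a scalar system K and let B = {b₁, …, bₙ} be a basis for Q. A quantity q ∈ Q is invertible if and only if μ_B(q) ≠ 0, and in that case μ_B(q⁻¹) = μ_B(q)⁻¹ = 1/μ_B(q). -/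
/-!
The measure is multiplicative, because multiplying two expansions
`α • ∏ bᵢ ^ kᵢ` and `β • ∏ bᵢ ^ mᵢ` gives the expansion `(α β) • ∏ bᵢ ^ (kᵢ + mᵢ)`,
and uniqueness of expansions identifies its scalar with the measure of the product.
Hence `μ(u) μ(u⁻¹) = μ(1) = 1` for a unit `u`. Conversely, if `q = μ • ∏ bᵢ ^ kᵢ`
with `μ ≠ 0`, then `μ⁻¹ • ∏ bᵢ ^ (-kᵢ)` is an inverse of `q`.
-/

namespace ScalableMonoid

variable {F : Type*} [Field F] {Q : Type*} [CommMonoid Q] (M : ScalableMonoid F Q)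

lemma smul_mul_smul {α β : F} (hα : α ∈ M.K) (hβ : β ∈ M.K) (x y : Q) :
    M.smul α x * M.smul β y = M.smul (α * β) (x * y) := by
  rw [← M.smul_mul hα, mul_comm x, ← M.smul_mul hβ, M.smul_smul hα hβ, mul_comm y]

lemma smul_prod_zpow_mul_smul_prod_zpow {n : ℕ} (b : Fin n → Qˣ) {α β : F}
    (hα : α ∈ M.K) (hβ : β ∈ M.K) (k m : Fin n → ℤ) :
    M.smul α ↑(∏ i, b i ^ k i) * M.smul β ↑(∏ i, b i ^ m i) =
      M.smul (α * β) ↑(∏ i, b i ^ (k i + m i)) := by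
  simp only [M.smul_mul_smul hα hβ, ← Units.val_mul, ← Finset.prod_mul_distrib, zpow_add]

variable {M} {n : ℕ} {b : Fin n → Qˣ} (hB : M.IsBasis b)

lemma measure_mem (q : Q) : M.measure hB q ∈ M.K :=
  (hB q).choose.1.2

lemma exists_eq_smul_measure (q : Q) :
    ∃ k : Fin n → ℤ, q = M.smul (M.measure hB q) ↑(∏ i, b i ^ k i) :=
  ⟨_, (hB q).choose_spec.1⟩

lemma measure_eq_of_eq_smul {q : Q} {μ : F} (hμ : μ ∈ M.K) (k : Fin n → ℤ)
    (h : q = M.smul μ ↑(∏ i, b i ^ k i)) : M.measure hB q = μ :=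
  congrArg (fun p : M.K × (Fin n → ℤ) => (p.1 : F)) ((hB q).choose_spec.2 (⟨μ, hμ⟩, k) h).symm

lemma measure_one : M.measure hB 1 = 1 :=
  measure_eq_of_eq_smul hB M.one_mem (fun _ => 0) (by simp [M.smul_one])

lemma measure_mul (q q' : Q) :
    M.measure hB (q * q') = M.measure hB q * M.measure hB q' := by
  obtain ⟨k, hk⟩ := exists_eq_smul_measure hB q
  obtain ⟨m, hm⟩ := exists_eq_smul_measure hB q'
  refine measure_eq_of_eq_smul hB (M.mul_mem (measure_mem hB q) (measure_mem hB q'))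
    (fun i => k i + m i) ?_
  conv_lhs => rw [hk, hm]
  exact M.smul_prod_zpow_mul_smul_prod_zpow b (measure_mem hB q) (measure_mem hB q') k m

lemma measure_mul_measure_inv (u : Qˣ) :
    M.measure hB u * M.measure hB ↑u⁻¹ = 1 := by
  rw [← measure_mul, Units.mul_inv, measure_one]

lemma isUnit_of_measure_ne_zero {q : Q} (hq : M.measure hB q ≠ 0) : IsUnit q := by
  obtain ⟨k, hk⟩ := exists_eq_smul_measure hB q
  refine .of_mul_eq_one (M.smul (M.measure hB q)⁻¹ ↑(∏ i, b i ^ (-k i))) ?_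
  nth_rw 1 [hk]
  rw [M.smul_prod_zpow_mul_smul_prod_zpow b (measure_mem hB q)
    (M.inv_mem (measure_mem hB q) hq), mul_inv_cancel₀ hq]
  simp [M.smul_one]

end ScalableMonoid

/-- For a quantity space `Q` with basis `B`, a quantity `q` is
invertible iff `μ_B(q) ≠ 0`, and in that case `μ_B(q⁻¹) = μ_B(q)⁻¹`. -/
theorem isUnit_iff_measure_ne_zero {F : Type*} [Field F] {Q : Type*} [CommMonoid Q]
    (M : ScalableMonoid F Q) {n : ℕ} {b : Fin n → Qˣ} (hB : M.IsBasis b) (q : Q) :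
    (IsUnit q ↔ M.measure hB q ≠ 0) ∧
    (∀ u : Qˣ, (u : Q) = q →
      M.measure hB ((u⁻¹ : Qˣ) : Q) = (M.measure hB q)⁻¹) := by
  refine ⟨⟨?_, ScalableMonoid.isUnit_of_measure_ne_zero hB⟩, ?_⟩
  · rintro ⟨u, rfl⟩
    exact left_ne_zero_of_mul_eq_one (ScalableMonoid.measure_mul_measure_inv hB u)
  · rintro u rfl
    exact (inv_eq_of_mul_eq_one_right (ScalableMonoid.measure_mul_measure_inv hB u)).symm
end

section
/- Let Q be a quantity space over a scalar system K with basis B = {b₁, …, bₙ}, and let q, q' ∈ Q have expansions q = μ_B(q) • ∏ᵢ bᵢ^{kᵢ} and q' = μ_B(q') • ∏ᵢ bᵢ^{kᵢ'} relative to B. If q ~ q' then kᵢ = kᵢ' for i = 1, …, n; that is, equidimensional quantities have the same exponent vector relative to any basis. -/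
/-- equidimensional quantities have the same exponent vector
relative to any basis: if `q = μ • ∏ bᵢ^{kᵢ}`, `q' = μ' • ∏ bᵢ^{kᵢ'}`
(with `μ, μ' ∈ K`) and `q ~ q'`, then `k = k'`. -/
theorem equidim_exponents_eq {F : Type*} [Field F] {Q : Type*} [CommMonoid Q]
    (M : ScalableMonoid F Q) {n : ℕ} {b : Fin n → Qˣ} (hB : M.IsBasis b)
    (q q' : Q) (mu mu' : F) (hmu : mu ∈ M.K) (hmu' : mu' ∈ M.K)
    (k k' : Fin n → ℤ)
    (hq : q = M.smul mu (↑(∏ i, b i ^ k i) : Q))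
    (hq' : q' = M.smul mu' (↑(∏ i, b i ^ k' i) : Q))
    (h : M.Equidim q q') : k = k' := by
  obtain ⟨α, β, hα, hβ, hαβ⟩ := h
  rw [hq, hq', M.smul_smul hα hmu, M.smul_smul hβ hmu'] at hαβ
  obtain ⟨p, -, hun⟩ := hB (M.smul (α * mu) (↑(∏ i, b i ^ k i) : Q))
  have h1 := hun (⟨⟨α * mu, M.mul_mem hα hmu⟩, k⟩ : M.K × (Fin n → ℤ)) rfl
  have h2 := hun (⟨⟨β * mu', M.mul_mem hβ hmu'⟩, k'⟩ : M.K × (Fin n → ℤ)) hαβ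
  have := h1.trans h2.symm
  exact congrArg Prod.snd this
end

section
/- Let Q be a quantity space over a scalar system K with basis B. If q, q' ∈ Q and q ~ q', then μ_B(q')•q = μ_B(q)•q'. -/
/-!
By uniqueness of expansions, scaling a quantity by an element of `K` leaves its exponent
vector relative to `B` unchanged, so equidimensional quantities `q ~ q'` share one exponent
vector `k`. Both sides of the claim are then `(μ_B(q) μ_B(q')) • ∏ i, b i ^ k i`.
-/

namespace ScalableMonoid

variable {F : Type*} [Field F] {Q : Type*} [CommMonoid Q] {M : ScalableMonoid F Q}
  {n : ℕ} {b : Fin n → Qˣ}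

/-- The exponent vector `k` in the expansion `q = μ_B(q) • ∏ i, b i ^ k i`. -/
noncomputable def exponents (hB : M.IsBasis b) (q : Q) : Fin n → ℤ :=
  (hB q).choose.2

namespace IsBasis

theorem measure_mem (hB : M.IsBasis b) (q : Q) : M.measure hB q ∈ M.K :=
  (hB q).choose.1.2

theorem smul_measure_exponents (hB : M.IsBasis b) (q : Q) :
    M.smul (M.measure hB q) ↑(∏ i, b i ^ M.exponents hB q i) = q :=
  (hB q).choose_spec.1.symm

theorem exponents_eq_of_eq_smul (hB : M.IsBasis b) {q : Q} {a : F} (ha : a ∈ M.K)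
    {k : Fin n → ℤ} (h : q = M.smul a ↑(∏ i, b i ^ k i)) : M.exponents hB q = k :=
  congrArg Prod.snd ((hB q).unique (hB q).choose_spec.1 (y₂ := (⟨a, ha⟩, k)) h)

theorem smul_eq_smul_exponents (hB : M.IsBasis b) {a : F} (ha : a ∈ M.K) (q : Q) :
    M.smul a q = M.smul (a * M.measure hB q) ↑(∏ i, b i ^ M.exponents hB q i) := by
  conv_lhs => rw [← hB.smul_measure_exponents q]
  exact M.smul_smul ha (hB.measure_mem q) _

theorem exponents_smul (hB : M.IsBasis b) {a : F} (ha : a ∈ M.K) (q : Q) :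
    M.exponents hB (M.smul a q) = M.exponents hB q :=
  hB.exponents_eq_of_eq_smul (M.mul_mem ha (hB.measure_mem q)) (hB.smul_eq_smul_exponents ha q)

end IsBasis

theorem Equidim.exponents_eq {q q' : Q} (h : M.Equidim q q') (hB : M.IsBasis b) :
    M.exponents hB q = M.exponents hB q' := by
  obtain ⟨α, β, hα, hβ, hαβ⟩ := h
  rw [← hB.exponents_smul hα, hαβ, hB.exponents_smul hβ]

end ScalableMonoid

/-- if `q ~ q'` then `μ_B(q')•q = μ_B(q)•q'`. -/
theorem equidim_measure_smul {F : Type*} [Field F] {Q : Type*} [CommMonoid Q]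
    (M : ScalableMonoid F Q) {n : ℕ} {b : Fin n → Qˣ} (hB : M.IsBasis b)
    (q q' : Q) (h : M.Equidim q q') :
    M.smul (M.measure hB q') q = M.smul (M.measure hB q) q' := by
  rw [hB.smul_eq_smul_exponents (hB.measure_mem q') q,
    hB.smul_eq_smul_exponents (hB.measure_mem q) q', h.exponents_eq hB, mul_comm]
end

section
/- Let Q be a quantity space over a scalar system K. If q ∈ Q satisfies q ~ 1_Q (q is quasiscalar), then the measure of q does not depend on the basis: for any two bases B and B' of Q, μ_B(q) = μ_{B'}(q). -/
lemma ScalableMonoid.measure_eq_of_eq_smul_one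
    {F : Type*} [Field F] {Q : Type*} [CommMonoid Q]
    (M : ScalableMonoid F Q) {n : ℕ} {b : Fin n → Qˣ} (hB : M.IsBasis b)
    {q : Q} {γ : F} (hγ : γ ∈ M.K) (hq : q = M.smul γ 1) :
    M.measure hB q = γ := by
  have hP : q = M.smul ((⟨⟨γ, hγ⟩, fun _ => 0⟩ : M.K × (Fin n → ℤ)).1 : F)
      (↑(∏ i, b i ^ ((⟨⟨γ, hγ⟩, fun _ => 0⟩ : M.K × (Fin n → ℤ)).2 i)) : Q) := by
    simpa using hq
  have h2 : (hB q).choose = (⟨⟨γ, hγ⟩, fun _ => 0⟩ : M.K × (Fin n → ℤ)) := by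
    have := (hB q).choose_spec
    exact (this.2 _ hP) ▸ rfl
  unfold ScalableMonoid.measure
  rw [h2]

/-- if `q ~ 1_Q` (q is quasiscalar), the measure of `q` is
independent of the basis: `μ_B(q) = μ_{B'}(q)` for any two bases `B, B'`. -/
theorem measure_quasiscalar_basis_independent
    {F : Type*} [Field F] {Q : Type*} [CommMonoid Q]
    (M : ScalableMonoid F Q) (q : Q) (h : M.Equidim q 1)
    {n : ℕ} {b : Fin n → Qˣ} (hB : M.IsBasis b)
    {n' : ℕ} {b' : Fin n' → Qˣ} (hB' : M.IsBasis b') :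
    M.measure hB q = M.measure hB' q := by
  obtain ⟨α, β, hα, hβ, heq⟩ := h
  have key : ∃ γ, ∃ _ : γ ∈ M.K, q = M.smul γ 1 := by
    by_cases h0 : α = 0
    · subst h0
      obtain ⟨⟨⟨μ, hμ⟩, k⟩, hspec, _⟩ := hB q
      have e1 : M.smul 0 q = M.smul (0 * μ) (↑(∏ i, b i ^ k i) : Q) := by
        rw [hspec]; exact M.smul_smul hα hμ _
      have e2 : M.smul 0 q = M.smul β (↑(∏ i, b i ^ ((fun _ => (0:ℤ)) i)) : Q) := by
        simpa using heq
      obtain ⟨p, _, hu⟩ := hB (M.smul 0 q)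
      have hk := (hu ⟨⟨0 * μ, M.mul_mem hα hμ⟩, k⟩ e1).trans
        (hu ⟨⟨β, hβ⟩, fun _ => 0⟩ e2).symm
      have hk2 : k = fun _ => (0 : ℤ) := congrArg Prod.snd hk
      refine ⟨μ, hμ, ?_⟩
      rw [hspec, hk2]; simp
    · refine ⟨α⁻¹ * β, M.mul_mem (M.inv_mem hα h0) hβ, ?_⟩
      have : M.smul α⁻¹ (M.smul α q) = M.smul α⁻¹ (M.smul β 1) := by rw [heq]
      rw [M.smul_smul (M.inv_mem hα h0) hα, M.smul_smul (M.inv_mem hα h0) hβ,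
        inv_mul_cancel₀ h0, M.smul_one] at this
      exact this
  obtain ⟨γ, hγ, hq⟩ := key
  rw [M.measure_eq_of_eq_smul_one hB hγ hq, M.measure_eq_of_eq_smul_one hB' hγ hq]
end

section
/- Let Q be a quantity space over a scalar system K. The sum of equidimensional quantities is well defined independently of the chosen invertible representative: if p, p' ∈ Q are invertible and λ₁, λ₂, μ₁, μ₂ ∈ K satisfy λ₁•p = μ₁•p' and λ₂•p = μ₂•p', then (λ₁ + λ₂)•p = (μ₁ + μ₂)•p'. -/
/-- the sum of equidimensional quantities is well defined,
independently of the chosen invertible representative: if `p, p'` are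
invertible and `λ₁•p = μ₁•p'`, `λ₂•p = μ₂•p'`, then
`(λ₁+λ₂)•p = (μ₁+μ₂)•p'`. -/
theorem sum_well_defined {F : Type*} [Field F] {Q : Type*} [CommMonoid Q]
    (M : ScalableMonoid F Q) (hQS : M.IsQuantitySpace)
    (p p' : Q) (hp : IsUnit p) (hp' : IsUnit p')
    (l1 l2 m1 m2 : F) (hl1 : l1 ∈ M.K) (hl2 : l2 ∈ M.K)
    (hm1 : m1 ∈ M.K) (hm2 : m2 ∈ M.K)
    (h1 : M.smul l1 p = M.smul m1 p') (h2 : M.smul l2 p = M.smul m2 p') :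
    M.smul (l1 + l2) p = M.smul (m1 + m2) p' := by
  obtain ⟨n, b, hB⟩ := hQS
  obtain ⟨⟨κ, k⟩, hpk, -⟩ := hB p
  obtain ⟨⟨κ', k'⟩, hpk', -⟩ := hB p'
  -- first equation
  obtain ⟨u1, -, hu1⟩ := hB (M.smul l1 p)
  have e1 : M.smul l1 p = M.smul ((l1 * κ : F)) (↑(∏ i, b i ^ k i)) := by
    rw [hpk, M.smul_smul hl1 κ.2]
  have e1' : M.smul l1 p = M.smul ((m1 * κ' : F)) (↑(∏ i, b i ^ k' i)) := by
    rw [h1, hpk', M.smul_smul hm1 κ'.2]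
  have hA := (hu1 ⟨⟨_, M.mul_mem hl1 κ.2⟩, k⟩ e1).trans
    (hu1 ⟨⟨_, M.mul_mem hm1 κ'.2⟩, k'⟩ e1').symm
  have hk : k = k' := congrArg Prod.snd hA
  have hs1 : l1 * κ = m1 * (κ' : F) := congrArg (fun x => (x.1 : F)) hA
  -- second equation
  obtain ⟨u2, -, hu2⟩ := hB (M.smul l2 p)
  have e2 : M.smul l2 p = M.smul ((l2 * κ : F)) (↑(∏ i, b i ^ k i)) := by
    rw [hpk, M.smul_smul hl2 κ.2]
  have e2' : M.smul l2 p = M.smul ((m2 * κ' : F)) (↑(∏ i, b i ^ k' i)) := by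
    rw [h2, hpk', M.smul_smul hm2 κ'.2]
  have hB2 := (hu2 ⟨⟨_, M.mul_mem hl2 κ.2⟩, k⟩ e2).trans
    (hu2 ⟨⟨_, M.mul_mem hm2 κ'.2⟩, k'⟩ e2').symm
  have hs2 : l2 * κ = m2 * (κ' : F) := congrArg (fun x => (x.1 : F)) hB2
  -- conclude
  have hsum : (l1 + l2) * κ = (m1 + m2) * (κ' : F) := by
    rw [add_mul, add_mul, hs1, hs2]
  rw [hpk, hpk', M.smul_smul (M.add_mem hl1 hl2) κ.2,
    M.smul_smul (M.add_mem hm1 hm2) κ'.2, hsum, hk]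
end

section
/- Let Q be a quantity space over a scalar system K. For every q ∈ Q there exists x ∈ Q such that q*x ~ 1_Q; consequently every class [q] in Q/~ has an inverse, and the quotient monoid Q/~ is an abelian group. -/
/-- for every `q` there is `x` with `q*x ~ 1_Q`; consequently
every class in the quotient monoid `Q/~` has an inverse, so `Q/~` is an
abelian group. (Here `c` is the equidimensionality relation as a
multiplicative congruence, and `c.Quotient` is the quotient commutative
monoid `Q/~`.) -/
theorem quotient_is_abelian_group {F : Type*} [Field F] {Q : Type*} [CommMonoid Q]
    (M : ScalableMonoid F Q) (hQS : M.IsQuantitySpace)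
    (c : Con Q) (hc : ∀ a b : Q, c a b ↔ M.Equidim a b) :
    (∀ q : Q, ∃ x : Q, M.Equidim (q * x) 1) ∧
    (∀ x : c.Quotient, ∃ y : c.Quotient, x * y = 1) := by
  have key : ∀ q : Q, ∃ x : Q, M.Equidim (q * x) 1 := by
    intro q
    obtain ⟨n, b, hB⟩ := hQS
    obtain ⟨⟨⟨μ, hμ⟩, k⟩, hq, -⟩ := hB q
    dsimp only at hq
    refine ⟨(↑(∏ i, b i ^ (-(k i))) : Q), 1, μ, M.one_mem, hμ, ?_⟩
    have : q * (↑(∏ i, b i ^ (-(k i))) : Q) = M.smul μ 1 := by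
      rw [hq, ← M.smul_mul hμ, ← Units.val_mul, ← Finset.prod_mul_distrib]
      congr 1
      have : (∏ i, (b i ^ k i * b i ^ (-(k i)))) = 1 := by
        apply Finset.prod_eq_one
        intro i _
        rw [← zpow_add, add_neg_cancel, zpow_zero]
      rw [this]; rfl
    rw [M.smul_one, this]
  refine ⟨key, ?_⟩
  intro x
  induction x using Con.induction_on with
  | H q =>
    obtain ⟨x, hx⟩ := key q
    exact ⟨(x : c.Quotient), by rw [← Con.coe_mul]; exact (Con.eq c).mpr ((hc _ _).mpr hx)⟩
end

section
/- Let Q be a quantity space over a scalar system K and let B = {b₁, …, bₙ} be a basis for Q. Then the classes [b₁], …, [bₙ] form a basis of the abelian group Q/~ with the same number of elements; concretely: (i) if bᵢ ~ bⱼ then i = j (the map bᵢ ↦ [bᵢ] is injective); (ii) for every q ∈ Q there exist integers k₁, …, kₙ with q ~ ∏ᵢ bᵢ^{kᵢ}; and (iii) if ∏ᵢ bᵢ^{kᵢ} ~ ∏ᵢ bᵢ^{kᵢ'} for integers kᵢ, kᵢ', then kᵢ = kᵢ' for all i. -/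
/-- if `b₁, …, bₙ` is a basis for the quantity space `Q`, then
`[b₁], …, [bₙ]` is a basis for `Q/~` with the same number of elements:
(i) `bᵢ ~ bⱼ → i = j`; (ii) every `q` satisfies `q ~ ∏ bᵢ^{kᵢ}` for some
integers `kᵢ`; (iii) `∏ bᵢ^{kᵢ} ~ ∏ bᵢ^{kᵢ'} → k = k'`. -/
theorem basis_classes_form_basis {F : Type*} [Field F] {Q : Type*} [CommMonoid Q]
    (M : ScalableMonoid F Q) {n : ℕ} {b : Fin n → Qˣ} (hB : M.IsBasis b) :
    (∀ i j : Fin n, M.Equidim ↑(b i) ↑(b j) → i = j) ∧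
    (∀ q : Q, ∃ k : Fin n → ℤ, M.Equidim q (↑(∏ i, b i ^ k i) : Q)) ∧
    (∀ k k' : Fin n → ℤ,
      M.Equidim (↑(∏ i, b i ^ k i) : Q) (↑(∏ i, b i ^ k' i) : Q) → k = k') := by
  have key : ∀ (α β : F), α ∈ M.K → β ∈ M.K → ∀ (k k' : Fin n → ℤ),
      M.smul α (↑(∏ i, b i ^ k i) : Q) = M.smul β (↑(∏ i, b i ^ k' i) : Q) →
      α = β ∧ k = k' := by
    intro α β hα hβ k k' h
    obtain ⟨p, hp, hu⟩ := hB (M.smul α (↑(∏ i, b i ^ k i) : Q))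
    have h1 := hu (⟨α, hα⟩, k) rfl
    have h2 := hu (⟨β, hβ⟩, k') h
    have := h1.trans h2.symm
    exact ⟨congrArg (fun p => (p.1 : F)) this, congrArg Prod.snd this⟩
  refine ⟨?_, ?_, ?_⟩
  · intro i j ⟨α, β, hα, hβ, h⟩
    have hi : (↑(b i) : Q) = ↑(∏ l, b l ^ (Pi.single i 1 : Fin n → ℤ) l) := by
      simp [Pi.single_apply]
    have hj : (↑(b j) : Q) = ↑(∏ l, b l ^ (Pi.single j 1 : Fin n → ℤ) l) := by
      simp [Pi.single_apply]
    rw [hi, hj] at h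
    have := (key α β hα hβ _ _ h).2
    by_contra hij
    have := congrFun this i
    simp [Pi.single_apply, hij] at this
  · intro q
    obtain ⟨p, hp, _⟩ := hB q
    exact ⟨p.2, 1, p.1, M.one_mem, p.1.2, by rw [M.smul_one, hp]⟩
  · intro k k' ⟨α, β, hα, hβ, h⟩
    exact (key α β hα hβ k k' h).2
end

section
/- Let Q be a quantity space over a scalar system K and let b₁, …, bₙ ∈ Q be invertible quantities such that (i) if bᵢ ~ bⱼ then i = j, (ii) for every q ∈ Q there exist integers k₁, …, kₙ with q ~ ∏ᵢ bᵢ^{kᵢ}, and (iii) if ∏ᵢ bᵢ^{kᵢ} ~ ∏ᵢ bᵢ^{kᵢ'} then kᵢ = kᵢ' for all i (i.e. [b₁], …, [bₙ] is a basis for Q/~). Then {b₁, …, bₙ} is a basis for Q: every q ∈ Q has a unique expansion q = μ • ∏ᵢ bᵢ^{kᵢ} with μ ∈ K and integers kᵢ. -/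
/-!
Fix any basis `e` of `Q`. A unit `u` expands as `ν • ∏ eᵢ^κᵢ` with `ν ≠ 0`, so comparing
expansions in `e` shows both that `q ~ u` forces `q = c • u` and that `c ↦ c • u` is injective.
Applied to `u = ∏ bᵢ^kᵢ` from (ii), with (iii) pinning down `k`, this gives existence and
uniqueness of the expansion in `b`.
-/

namespace ScalableMonoid

variable {F : Type*} [Field F] {Q : Type*} [CommMonoid Q] (M : ScalableMonoid F Q)

lemma smul_mul_smul_s12 {a c : F} (ha : a ∈ M.K) (hc : c ∈ M.K) (q q' : Q) :
    M.smul a q * M.smul c q' = M.smul (a * c) (q * q') := by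
  rw [← M.smul_mul ha, mul_comm q, ← M.smul_mul hc, M.smul_smul ha hc, mul_comm q']

lemma inv_smul_smul {a : F} (ha : a ∈ M.K) (ha0 : a ≠ 0) (q : Q) :
    M.smul a⁻¹ (M.smul a q) = q := by
  rw [M.smul_smul (M.inv_mem ha ha0) ha, inv_mul_cancel₀ ha0, M.smul_one]

namespace IsBasis

variable {M} {m : ℕ} {e : Fin m → Qˣ}

lemma eq_of_smul_prod_eq (hB : M.IsBasis e) {μ ν : F} (hμ : μ ∈ M.K) (hν : ν ∈ M.K)
    {κ κ' : Fin m → ℤ}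
    (h : M.smul μ (↑(∏ i, e i ^ κ i) : Q) = M.smul ν (↑(∏ i, e i ^ κ' i) : Q)) :
    μ = ν ∧ κ = κ' := by
  have := (hB _).unique (y₁ := (⟨μ, hμ⟩, κ)) (y₂ := (⟨ν, hν⟩, κ')) rfl h
  exact ⟨congrArg (fun p => (p.1 : F)) this, congrArg Prod.snd this⟩

/-- Expanding `1 = u * u⁻¹` shows that the scalar in the expansion of a unit divides `1`. -/
lemma exists_unit_eq_smul_prod (hB : M.IsBasis e) (u : Qˣ) :
    ∃ ν ∈ M.K, ν ≠ 0 ∧ ∃ κ : Fin m → ℤ, (u : Q) = M.smul ν (↑(∏ i, e i ^ κ i) : Q) := by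
  obtain ⟨⟨⟨ν, hν⟩, κ⟩, hu, -⟩ := hB u
  obtain ⟨⟨⟨ρ, hρ⟩, κ'⟩, hu', -⟩ := hB ↑u⁻¹
  have hone : M.smul (ν * ρ) (↑(∏ i, e i ^ (κ + κ') i) : Q) =
      M.smul 1 (↑(∏ i, e i ^ (0 : Fin m → ℤ) i) : Q) := by
    simp only [Pi.add_apply, zpow_add, Finset.prod_mul_distrib, Units.val_mul,
      ← M.smul_mul_smul_s12 hν hρ, ← hu, ← hu', Units.mul_inv, Pi.zero_apply, zpow_zero,
      Finset.prod_const_one, Units.val_one, M.smul_one]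
  have hνρ : ν * ρ = 1 := (hB.eq_of_smul_prod_eq (M.mul_mem hν hρ) M.one_mem hone).1
  exact ⟨ν, hν, left_ne_zero_of_mul_eq_one hνρ, κ, hu⟩

lemma exists_eq_smul_of_equidim (hB : M.IsBasis e) {q : Q} {u : Qˣ}
    (h : M.Equidim q u) : ∃ c ∈ M.K, q = M.smul c u := by
  obtain ⟨α, β, hα, hβ, hαβ⟩ := h
  obtain ⟨⟨⟨μ, hμ⟩, κ⟩, hq, -⟩ := hB q
  obtain ⟨ν, hν, hν0, κ', hu⟩ := hB.exists_unit_eq_smul_prod u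
  have hκ : κ = κ' := by
    refine (hB.eq_of_smul_prod_eq (M.mul_mem hα hμ) (M.mul_mem hβ hν) ?_).2
    rw [← M.smul_smul hα hμ, ← M.smul_smul hβ hν, ← hq, ← hu, hαβ]
  refine ⟨μ * ν⁻¹, M.mul_mem hμ (M.inv_mem hν hν0), ?_⟩
  rw [← M.smul_smul hμ (M.inv_mem hν hν0), hu, M.inv_smul_smul hν hν0, hq, hκ]

lemma eq_of_smul_unit_eq (hB : M.IsBasis e) {u : Qˣ} {μ μ' : F} (hμ : μ ∈ M.K)
    (hμ' : μ' ∈ M.K) (h : M.smul μ (u : Q) = M.smul μ' u) : μ = μ' := by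
  obtain ⟨ν, hν, hν0, κ, hu⟩ := hB.exists_unit_eq_smul_prod u
  rw [hu, M.smul_smul hμ hν, M.smul_smul hμ' hν] at h
  exact mul_right_cancel₀ hν0 (hB.eq_of_smul_prod_eq (M.mul_mem hμ hν) (M.mul_mem hμ' hν) h).1

end IsBasis

end ScalableMonoid

theorem basis_of_classes_basis_general {F : Type*} [Field F] {Q : Type*} [CommMonoid Q]
    (M : ScalableMonoid F Q) (hQS : M.IsQuantitySpace)
    {n : ℕ} (b : Fin n → Qˣ)
    (h2 : ∀ q : Q, ∃ k : Fin n → ℤ, M.Equidim q (↑(∏ i, b i ^ k i) : Q))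
    (h3 : ∀ k k' : Fin n → ℤ,
      M.Equidim (↑(∏ i, b i ^ k i) : Q) (↑(∏ i, b i ^ k' i) : Q) → k = k') :
    M.IsBasis b := by
  obtain ⟨m, e, hE⟩ := hQS
  intro q
  obtain ⟨k, hk⟩ := h2 q
  obtain ⟨c, hc, hq⟩ := hE.exists_eq_smul_of_equidim hk
  refine ⟨(⟨c, hc⟩, k), hq, ?_⟩
  rintro ⟨⟨μ, hμ⟩, k'⟩ hq'
  obtain rfl : k' = k := h3 k' k ⟨μ, c, hμ, hc, hq'.symm.trans hq⟩
  obtain rfl : μ = c := hE.eq_of_smul_unit_eq hμ hc (hq'.symm.trans hq)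
  rfl

/-- conversely, if `Q` is a quantity space and the invertible
quantities `b₁, …, bₙ` satisfy (i) `bᵢ ~ bⱼ → i = j`, (ii) every `q` satisfies
`q ~ ∏ bᵢ^{kᵢ}` for some integers `kᵢ`, and (iii)
`∏ bᵢ^{kᵢ} ~ ∏ bᵢ^{kᵢ'} → k = k'` (i.e. `[b₁], …, [bₙ]` is a basis for `Q/~`),
then `b₁, …, bₙ` is a basis for `Q`. -/
theorem basis_of_classes_basis {F : Type*} [Field F] {Q : Type*} [CommMonoid Q]
    (M : ScalableMonoid F Q) (hQS : M.IsQuantitySpace)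
    {n : ℕ} (b : Fin n → Qˣ)
    (h1 : ∀ i j : Fin n, M.Equidim ↑(b i) ↑(b j) → i = j)
    (h2 : ∀ q : Q, ∃ k : Fin n → ℤ, M.Equidim q (↑(∏ i, b i ^ k i) : Q))
    (h3 : ∀ k k' : Fin n → ℤ,
      M.Equidim (↑(∏ i, b i ^ k i) : Q) (↑(∏ i, b i ^ k' i) : Q) → k = k') :
    M.IsBasis b :=
  basis_of_classes_basis_general M hQS b h2 h3
end

section
/- Let Q be a quantity space over a scalar system K. Any two finite bases for Q have the same number of elements: if b₁, …, bₙ and c₁, …, c_m are both bases for Q, then n = m. -/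
section Aux

variable {F : Type*} [Field F] {Q : Type*} [CommMonoid Q] (M : ScalableMonoid F Q)

private lemma smul_mul_smul' {α β : F} (hα : α ∈ M.K) (hβ : β ∈ M.K) (q q' : Q) :
    M.smul α q * M.smul β q' = M.smul (α * β) (q * q') := by
  rw [← M.smul_mul hα, mul_comm q, ← M.smul_mul hβ, M.smul_smul hα hβ, mul_comm q']

/-- Exponent (and scalar) uniqueness from a basis. -/
private lemma exp_unique {n : ℕ} {b : Fin n → Qˣ} (hb : M.IsBasis b) {q : Q}
    {α β : F} (hα : α ∈ M.K) (hβ : β ∈ M.K) {k k' : Fin n → ℤ}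
    (h1 : q = M.smul α (↑(∏ i, b i ^ k i) : Q))
    (h2 : q = M.smul β (↑(∏ i, b i ^ k' i) : Q)) : α = β ∧ k = k' := by
  have := (hb q).unique (y₁ := (⟨α, hα⟩, k)) (y₂ := (⟨β, hβ⟩, k')) h1 h2
  exact ⟨congrArg (fun p => (p.1 : F)) this, congrArg Prod.snd this⟩

/-- The scalar in the expansion of an invertible quantity is nonzero. -/
private lemma unit_scalar_ne_zero {n : ℕ} {b : Fin n → Qˣ} (hb : M.IsBasis b)
    {α : F} (hα : α ∈ M.K) (u P : Qˣ) (h : (u : Q) = M.smul α (P : Q)) : α ≠ 0 := by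
  intro h0
  subst h0
  have hz : M.smul 0 (1 : Q) = ((u * P⁻¹ : Qˣ) : Q) := by
    have := M.smul_mul hα (P : Q) ((P⁻¹ : Qˣ) : Q)
    rw [Units.mul_inv] at this
    rw [this, ← h, Units.val_mul]
  -- idempotent unit is 1
  have hzz : M.smul 0 (1 : Q) * M.smul 0 (1 : Q) = M.smul 0 (1 : Q) := by
    conv_lhs => rw [← M.smul_mul hα, one_mul, M.smul_smul hα hα, mul_zero]
  rw [hz, ← Units.val_mul] at hzz
  have h1 : (u * P⁻¹ : Qˣ) * (u * P⁻¹) = u * P⁻¹ := Units.ext hzz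
  have h2 : (u * P⁻¹ : Qˣ) = 1 := by
    have := mul_right_cancel (a := (u * P⁻¹ : Qˣ)) (b := u * P⁻¹) (c := 1)
    exact this (by rw [one_mul, h1])
  rw [h2, Units.val_one] at hz
  -- two expansions of 1
  have hP1 : (↑(∏ i, b i ^ ((fun _ => (0:ℤ)) i)) : Q) = 1 := by simp
  have e1 : (1 : Q) = M.smul 1 (↑(∏ i, b i ^ ((fun _ => (0:ℤ)) i)) : Q) := by
    rw [hP1, M.smul_one]
  have e2 : (1 : Q) = M.smul 0 (↑(∏ i, b i ^ ((fun _ => (0:ℤ)) i)) : Q) := by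
    rw [hP1]; exact hz.symm
  have := (exp_unique M hb M.one_mem hα e1 e2).1
  exact one_ne_zero this

end Aux

/-- any two finite bases for a quantity space have the same
number of elements. -/
theorem bases_same_cardinality {F : Type*} [Field F] {Q : Type*} [CommMonoid Q]
    (M : ScalableMonoid F Q) {n m : ℕ} {b : Fin n → Qˣ} {c : Fin m → Qˣ}
    (hb : M.IsBasis b) (hc : M.IsBasis c) : n = m := by
  classical
  -- expansion of `∏ b ^ k` in the basis `c`
  set f : (Fin n → ℤ) → (Fin m → ℤ) := fun k => (hc (↑(∏ i, b i ^ k i) : Q)).choose.2 with hf_def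
  set μf : (Fin n → ℤ) → F := fun k => ((hc (↑(∏ i, b i ^ k i) : Q)).choose.1 : F) with hμf_def
  have hf : ∀ k, (↑(∏ i, b i ^ k i) : Q) = M.smul (μf k) (↑(∏ j, c j ^ f k j) : Q) :=
    fun k => (hc (↑(∏ i, b i ^ k i) : Q)).choose_spec.1
  have hμfK : ∀ k, μf k ∈ M.K := fun k => (hc (↑(∏ i, b i ^ k i) : Q)).choose.1.2
  have hμf0 : ∀ k, μf k ≠ 0 := fun k =>
    unit_scalar_ne_zero M hb (hμfK k) (∏ i, b i ^ k i) (∏ j, c j ^ f k j) (hf k)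
  -- expansion of `∏ c ^ l` in the basis `b`
  set g : (Fin m → ℤ) → (Fin n → ℤ) := fun l => (hb (↑(∏ j, c j ^ l j) : Q)).choose.2 with hg_def
  set μg : (Fin m → ℤ) → F := fun l => ((hb (↑(∏ j, c j ^ l j) : Q)).choose.1 : F) with hμg_def
  have hg : ∀ l, (↑(∏ j, c j ^ l j) : Q) = M.smul (μg l) (↑(∏ i, b i ^ g l i) : Q) :=
    fun l => (hb (↑(∏ j, c j ^ l j) : Q)).choose_spec.1
  have hμgK : ∀ l, μg l ∈ M.K := fun l => (hb (↑(∏ j, c j ^ l j) : Q)).choose.1.2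
  have hμg0 : ∀ l, μg l ≠ 0 := fun l =>
    unit_scalar_ne_zero M hb (hμgK l) (∏ j, c j ^ l j) (∏ i, b i ^ g l i) (hg l)
  -- `f` is additive
  have hadd : ∀ k k', f (k + k') = f k + f k' := by
    intro k k'
    have hprod : (∏ i, b i ^ (k + k') i) = (∏ i, b i ^ k i) * (∏ i, b i ^ k' i) := by
      rw [← Finset.prod_mul_distrib]
      exact Finset.prod_congr rfl fun i _ => zpow_add (b i) (k i) (k' i)
    have hL : (↑(∏ i, b i ^ (k + k') i) : Q)
        = M.smul (μf k * μf k') (↑(∏ j, c j ^ (f k + f k') j) : Q) := by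
      have hprod' : (∏ j, c j ^ (f k + f k') j) = (∏ j, c j ^ f k j) * (∏ j, c j ^ f k' j) := by
        rw [← Finset.prod_mul_distrib]
        exact Finset.prod_congr rfl fun j _ => zpow_add (c j) (f k j) (f k' j)
      rw [hprod, Units.val_mul, hf k, hf k', smul_mul_smul' M (hμfK k) (hμfK k'), hprod',
        Units.val_mul]
    exact (exp_unique M hc (hμfK (k + k')) (M.mul_mem (hμfK k) (hμfK k')) (hf (k + k')) hL).2
  -- `g` inverts `f`
  have hgf : ∀ k, g (f k) = k := by
    intro k
    have h2 : (↑(∏ j, c j ^ f k j) : Q) = M.smul (μf k)⁻¹ (↑(∏ i, b i ^ k i) : Q) := by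
      have h3 := congrArg (M.smul (μf k)⁻¹) (hf k)
      rw [M.smul_smul (M.inv_mem (hμfK k) (hμf0 k)) (hμfK k),
        inv_mul_cancel₀ (hμf0 k), M.smul_one] at h3
      exact h3.symm
    exact (exp_unique M hb (hμgK (f k)) (M.inv_mem (hμfK k) (hμf0 k)) (hg (f k)) h2).2
  -- `f` inverts `g`
  have hfg : ∀ l, f (g l) = l := by
    intro l
    have h2 : (↑(∏ i, b i ^ g l i) : Q) = M.smul (μg l)⁻¹ (↑(∏ j, c j ^ l j) : Q) := by
      have h3 := congrArg (M.smul (μg l)⁻¹) (hg l)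
      rw [M.smul_smul (M.inv_mem (hμgK l) (hμg0 l)) (hμgK l),
        inv_mul_cancel₀ (hμg0 l), M.smul_one] at h3
      exact h3.symm
    exact (exp_unique M hc (hμfK (g l)) (M.inv_mem (hμgK l) (hμg0 l)) (hf (g l)) h2).2
  -- assemble an additive equivalence and compare ranks
  let E : (Fin n → ℤ) ≃+ (Fin m → ℤ) :=
    { toFun := f, invFun := g, left_inv := hgf, right_inv := hfg, map_add' := hadd }
  have hfr := E.toIntLinearEquiv.finrank_eq
  rwa [Module.finrank_fin_fun, Module.finrank_fin_fun] at hfr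
end

section
/- Let Q be a quantity space over the scalar system ℝ>0 of positive real numbers, let q ∈ Q, and let k be a positive integer. If 𝔭 ∈ Q satisfies 𝔭 ~ q^k (i.e. 𝔭 lies in the dimension [q]^k), then there exists a unique p ∈ Q with p ~ q and p^k = 𝔭 (the k-th root of 𝔭 in the dimension [q]). -/
namespace ScalableMonoid
variable {Q : Type*} [CommMonoid Q] (M : ScalableMonoid ℝ Q)

theorem pow_mem {a : ℝ} (ha : a ∈ M.K) : ∀ n : ℕ, a ^ n ∈ M.K
  | 0 => by simpa using M.one_mem
  | n + 1 => by rw [pow_succ]; exact M.mul_mem (pow_mem ha n) ha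

theorem smul_pow {a : ℝ} (ha : a ∈ M.K) (x : Q) :
    ∀ n : ℕ, (M.smul a x) ^ n = M.smul (a ^ n) (x ^ n)
  | 0 => by simp [M.smul_one]
  | n + 1 => by
    have hmem := M.pow_mem ha n
    calc (M.smul a x) ^ (n + 1)
        = M.smul a x * (M.smul a x) ^ n := by rw [pow_succ, mul_comm]
      _ = M.smul a x * M.smul (a ^ n) (x ^ n) := by rw [smul_pow ha x n]
      _ = M.smul a (x * M.smul (a ^ n) (x ^ n)) := by rw [M.smul_mul ha]
      _ = M.smul a (M.smul (a ^ n) (x ^ n) * x) := by rw [mul_comm x]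
      _ = M.smul a (M.smul (a ^ n) (x ^ n * x)) := by rw [M.smul_mul hmem]
      _ = M.smul (a * a ^ n) (x ^ n * x) := M.smul_smul ha hmem _
      _ = M.smul (a ^ (n + 1)) (x ^ (n + 1)) := by rw [← pow_succ', ← pow_succ]

theorem smul_cancel {a : ℝ} (ha : a ∈ M.K) (ha0 : a ≠ 0) (x : Q) :
    M.smul a⁻¹ (M.smul a x) = x := by
  rw [M.smul_smul (M.inv_mem ha ha0) ha, inv_mul_cancel₀ ha0, M.smul_one]

end ScalableMonoid


/-- in a quantity space over the positive reals, if `𝔭 ~ q^k`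
for a positive integer `k`, then there is a unique `p` with `p ~ q` and
`p^k = 𝔭` (the k-th root of `𝔭` in the dimension `[q]`). -/
theorem exists_unique_root {Q : Type*} [CommMonoid Q]
    (M : ScalableMonoid ℝ Q) (hK : M.K = {x : ℝ | 0 < x})
    (hQS : M.IsQuantitySpace)
    (q frakp : Q) (k : ℕ) (hk : 0 < k) (h : M.Equidim frakp (q ^ k)) :
    ∃! p : Q, M.Equidim p q ∧ p ^ k = frakp := by
  have mem : ∀ {x : ℝ}, 0 < x → x ∈ M.K := fun hx => by rw [hK]; exact hx
  have pos : ∀ {x : ℝ}, x ∈ M.K → 0 < x := fun hx => by rwa [hK] at hx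
  obtain ⟨n, b, hB⟩ := hQS
  obtain ⟨α, β, hα, hβ, hEq⟩ := h
  have hα' := pos hα
  have hβ' := pos hβ
  obtain ⟨⟨⟨μ, hμK⟩, e⟩, hq, -⟩ := hB q
  have hμ : 0 < μ := pos hμK
  simp only at hq
  set P : Qˣ := ∏ i, b i ^ e i with hP
  have hPk : P ^ k = ∏ i, b i ^ ((k : ℤ) * e i) := by
    rw [hP, ← Finset.prod_pow]
    exact Finset.prod_congr rfl fun i _ => by rw [← zpow_natCast, ← zpow_mul, mul_comm]
  have hqk : q ^ k = M.smul (μ ^ k) ↑(P ^ k) := by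
    rw [hq, M.smul_pow hμK, Units.val_pow_eq_pow_val]
  set ν : ℝ := α⁻¹ * (β * μ ^ k) with hνdef
  have hν : 0 < ν := by positivity
  have h𝔭 : frakp = M.smul ν ↑(P ^ k) := by
    have : frakp = M.smul α⁻¹ (M.smul α frakp) := (M.smul_cancel hα hα'.ne' frakp).symm
    rw [this, hEq, hqk, M.smul_smul hβ (M.pow_mem hμK k),
      M.smul_smul (M.inv_mem hα hα'.ne') (M.mul_mem hβ (M.pow_mem hμK k))]
  set γ : ℝ := ν ^ ((k : ℝ)⁻¹) with hγdef
  have hγ : 0 < γ := Real.rpow_pos_of_pos hν _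
  have hγk : γ ^ k = ν := Real.rpow_inv_natCast_pow hν.le hk.ne'
  refine ⟨M.smul γ ↑P, ⟨⟨μ, γ, mem hμ, mem hγ, ?_⟩, ?_⟩, ?_⟩
  · rw [M.smul_smul (mem hμ) (mem hγ), mul_comm, hq,
      M.smul_smul (mem hγ) hμK]
  · rw [M.smul_pow (mem hγ), hγk, h𝔭, Units.val_pow_eq_pow_val]
  · rintro p' ⟨⟨δ, ε, hδ, hε, hpe⟩, hpk⟩
    obtain ⟨⟨⟨μ', hμ'K⟩, e'⟩, hp', -⟩ := hB p'
    have hμ' : 0 < μ' := pos hμ'K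
    simp only at hp'
    obtain ⟨w, -, hwu⟩ := hB (M.smul δ p')
    have h1 := hwu ⟨⟨δ * μ', M.mul_mem hδ hμ'K⟩, e'⟩ (by
      simp only
      rw [hp', M.smul_smul hδ hμ'K])
    have h2 := hwu ⟨⟨ε * μ, M.mul_mem hε hμK⟩, e⟩ (by
      simp only
      rw [hpe, hq, M.smul_smul hε hμK])
    have hee : e' = e := congrArg Prod.snd (h1.trans h2.symm)
    rw [hee, ← hP] at hp'
    obtain ⟨w2, -, hw2u⟩ := hB frakp
    have h3 := hw2u ⟨⟨μ' ^ k, M.pow_mem hμ'K k⟩, fun i => (k : ℤ) * e i⟩ (by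
      simp only
      rw [← hpk, hp', M.smul_pow hμ'K]
      congr 1
      rw [← Units.val_pow_eq_pow_val, hPk])
    have h4 := hw2u ⟨⟨ν, mem hν⟩, fun i => (k : ℤ) * e i⟩ (by
      simp only
      rw [h𝔭]
      congr 1
      rw [hPk])
    have hμν : μ' ^ k = ν := congrArg (fun z => (z.1 : ℝ)) (h3.trans h4.symm)
    have hμγ : μ' = γ :=
      (pow_left_inj₀ hμ'.le hγ.le hk.ne').mp (hμν.trans hγk.symm)
    rw [hp', hμγ]
end
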